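/- Let Π : [t₀, ∞) → ℝ satisfy Π' = -δ(w(t)² + Π²) with Π(t₀) = Π̄ > 0, where δ > 0 and w is continuous with |w(t)| ≤ M for all t. Let 0 < Π_low < Π̄. Then the first time T at which Π(T) = Π_low satisfies T - t₀ ≥ (Π̄ - Π_low)/(δ(M² + Π̄²)); in particular the inter-execution time is bounded below by a positive constant. -/

import Mathlib

lemma mono_aux {f f' : ℝ → ℝ} {a b : ℝ} (hab : a ≤ b)
    (hd : ∀ t ∈ Set.Icc a b, HasDerivAt f (f' t) t)
    (hpos : ∀ t ∈ Set.Icc a b, 0 ≤ f' t) : f a ≤ f b := by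
  have hmono : MonotoneOn f (Set.Icc a b) := by
    apply monotoneOn_of_deriv_nonneg (convex_Icc a b)
    · exact fun t ht => (hd t ht).continuousAt.continuousWithinAt
    · intro t ht
      rw [interior_Icc] at ht
      exact (hd t (Set.Ioo_subset_Icc_self ht)).differentiableAt.differentiableWithinAt
    · intro t ht
      rw [interior_Icc] at ht
      rw [(hd t (Set.Ioo_subset_Icc_self ht)).deriv]
      exact hpos t (Set.Ioo_subset_Icc_self ht)
  exact hmono (Set.left_mem_Icc.2 hab) (Set.right_mem_Icc.2 hab) hab

theorem stmt_11 (Clk w : ℝ → ℝ) (t₀ δ Clkbar Clklow M T : ℝ) (hδ : 0 < δ)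
    (hClkbar : 0 < Clkbar) (hlow : 0 < Clklow) (hlt : Clklow < Clkbar)
    (hw : Continuous w) (hwM : ∀ t, |w t| ≤ M)
    (hderiv : ∀ t, t₀ ≤ t → HasDerivAt Clk (-δ * ((w t) ^ 2 + (Clk t) ^ 2)) t)
    (hinit : Clk t₀ = Clkbar)
    (hT : t₀ ≤ T) (hhit : Clk T = Clklow)
    (hfirst : ∀ t, t₀ ≤ t → t < T → Clk t ≠ Clklow) :
    (Clkbar - Clklow) / (δ * (M ^ 2 + Clkbar ^ 2)) ≤ T - t₀ := by
  have hM : 0 ≤ M := le_trans (abs_nonneg _) (hwM 0)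
  have hC : 0 < δ * (M ^ 2 + Clkbar ^ 2) := by positivity
  -- Clk is decreasing after t₀ : Clk t ≤ Clkbar for t ∈ [t₀, T]
  have hub : ∀ t ∈ Set.Icc t₀ T, Clk t ≤ Clkbar := by
    intro t ht
    have h := mono_aux (f := fun s => -Clk s)
      (f' := fun s => δ * ((w s) ^ 2 + (Clk s) ^ 2)) ht.1
      (fun s hs => by
        have := (hderiv s hs.1).fun_neg
        simpa using this)
      (fun s hs => by positivity)
    have h' : -Clk t₀ ≤ -Clk t := h
    rw [hinit] at h'
    linarith
  -- Clk t ≥ Clklow on [t₀, T] by IVT and first-hit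
  have hlb : ∀ t ∈ Set.Icc t₀ T, Clklow ≤ Clk t := by
    intro s hs
    by_contra hcon
    push_neg at hcon
    have hcont : ContinuousOn Clk (Set.Icc t₀ s) := fun u hu =>
      (hderiv u hu.1).continuousAt.continuousWithinAt
    have hmem : Clklow ∈ Set.Icc (Clk s) (Clk t₀) := by
      rw [hinit]; exact ⟨le_of_lt hcon, le_of_lt hlt⟩
    obtain ⟨u, hu, hu2⟩ := intermediate_value_Icc' hs.1 hcont hmem
    have hsT : s < T := by
      rcases lt_or_eq_of_le hs.2 with h | h
      · exact h
      · exfalso; rw [h, hhit] at hcon; exact absurd rfl (ne_of_lt hcon)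
    exact hfirst u hu.1 (lt_of_le_of_lt hu.2 hsT) hu2
  -- derivative lower bound: g(t) = Clk t + C * t is monotone on [t₀, T]
  set C := δ * (M ^ 2 + Clkbar ^ 2) with hCdef
  have key : Clk t₀ + C * t₀ ≤ Clk T + C * T := by
    apply mono_aux (f' := fun s => -δ * ((w s) ^ 2 + (Clk s) ^ 2) + C) hT
    · intro s hs
      have h := (hderiv s hs.1).fun_add (HasDerivAt.const_mul C (hasDerivAt_id s))
      simpa using h
    · intro s hs
      have h1 : (w s) ^ 2 ≤ M ^ 2 := by
        have := hwM s
        nlinarith [abs_nonneg (w s), sq_abs (w s)]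
      have h2 : (Clk s) ^ 2 ≤ Clkbar ^ 2 := by
        have := hub s hs
        have := hlb s hs
        nlinarith
      have : δ * ((w s) ^ 2 + (Clk s) ^ 2) ≤ C := by
        rw [hCdef]
        apply mul_le_mul_of_nonneg_left (by linarith) (le_of_lt hδ)
      linarith
  rw [hinit, hhit] at key
  rw [div_le_iff₀ hC]
  nlinarith
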